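/- Let X be a vector space with function calculus maps Φ_x as above (linear, satisfying the projection and composition identities), regarded as a vector lattice via x ≤ y ⇔ Φ_{(x,y)}(max) = y. Then X is Archimedean if and only if ker Φ_x is closed in H_n for every n ∈ ℕ and x ∈ Xⁿ, where H_n carries the supremum-norm topology obtained by identifying H_n with C(S), S the unit sphere of ℓ∞ⁿ. -/

import Mathlib

/-- `H_n`: positively homogeneous continuous functions `ℝⁿ → ℝ`. -/
def MemHn {n : ℕ} (f : (Fin n → ℝ) → ℝ) : Prop :=
  Continuous f ∧ ∀ (c : ℝ), 0 ≤ c → ∀ t, f (c • t) = c * f t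

/-- the `i`-th coordinate projection, an element of `H_n`. -/
def projFn (n : ℕ) (i : Fin n) : (Fin n → ℝ) → ℝ := fun t => t i

section VL
variable {X : Type*} [Lattice X] [AddCommGroup X] [Module ℝ X]

/-- A vector lattice homomorphism `H_n → X`, encoded as a map on all functions
that is linear and sup-preserving on members of `H_n`. -/
def IsVLHomHn {n : ℕ} (Φ : ((Fin n → ℝ) → ℝ) → X) : Prop :=
  (∀ f g, MemHn f → MemHn g → Φ (f + g) = Φ f + Φ g) ∧
  (∀ (c : ℝ) f, MemHn f → Φ (c • f) = c • Φ f) ∧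
  (∀ f g, MemHn f → MemHn g → Φ (f ⊔ g) = Φ f ⊔ Φ g)

/-- The order ideal generated by `e`. -/
def Ie (e : X) : Set X := {x | ∃ l : ℝ, 0 ≤ l ∧ |x| ≤ l • e}

/-- `‖x‖_e = inf {λ ≥ 0 : |x| ≤ λ e}`. -/
noncomputable def enorm (e x : X) : ℝ := sInf {l : ℝ | 0 ≤ l ∧ |x| ≤ l • e}

/-- A sublattice and linear subspace. -/
def IsSubl (S : Set X) : Prop :=
  (0 : X) ∈ S ∧ (∀ a ∈ S, ∀ b ∈ S, a + b ∈ S) ∧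
  (∀ (c : ℝ), ∀ a ∈ S, c • a ∈ S) ∧ (∀ a ∈ S, ∀ b ∈ S, a ⊔ b ∈ S)

/-- `S` is closed in the carrier `C` with respect to the `‖·‖_e`-distance. -/
def ClosedIn (e : X) (C S : Set X) : Prop :=
  ∀ x ∈ C, (∀ ε : ℝ, 0 < ε → ∃ y ∈ S, enorm e (x - y) < ε) → x ∈ S

/-- The closed sublattice of `C` generated by the set `A`. -/
def genClosedSubl (e : X) (C A : Set X) : Set X :=
  ⋂₀ {S : Set X | S ⊆ C ∧ A ⊆ S ∧ IsSubl S ∧ ClosedIn e C S}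

/-- The norm `‖·‖_e` is complete on `S`: every `‖·‖_e`-Cauchy sequence in `S`
converges, in `‖·‖_e`, to an element of `S`. -/
def CompleteOn (e : X) (S : Set X) : Prop :=
  ∀ u : ℕ → X, (∀ k, u k ∈ S) →
    (∀ ε : ℝ, 0 < ε → ∃ N, ∀ m ≥ N, ∀ n ≥ N, enorm e (u m - u n) < ε) →
    ∃ x ∈ S, ∀ ε : ℝ, 0 < ε → ∃ N, ∀ m ≥ N, enorm e (u m - x) < ε

end VL

/-- An Archimedean vector lattice. -/
def IsArchimedeanVL (X : Type*) [Lattice X] [AddCommGroup X] : Prop :=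
  ∀ x y : X, 0 ≤ x → 0 ≤ y → (∀ n : ℕ, n • x ≤ y) → x = 0

/-- The pointwise-maximum function `σ(t₁,t₂) = t₁ ∨ t₂`, an element of `H₂`. -/
noncomputable def sigmaMax : (Fin 2 → ℝ) → ℝ := fun t => max (t 0) (t 1)

/- ### Auxiliary lemmas -/

lemma memHn_zero {n : ℕ} : MemHn (0 : (Fin n → ℝ) → ℝ) :=
  ⟨continuous_const, fun c _ t => by simp⟩

lemma memHn_add {n : ℕ} {f g : (Fin n → ℝ) → ℝ} (hf : MemHn f) (hg : MemHn g) :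
    MemHn (f + g) :=
  ⟨hf.1.add hg.1, fun c hc t => by
    simp only [Pi.add_apply, hf.2 c hc t, hg.2 c hc t]; ring⟩

lemma memHn_smul {n : ℕ} (c : ℝ) {f : (Fin n → ℝ) → ℝ} (hf : MemHn f) :
    MemHn (c • f) :=
  ⟨continuous_const.mul hf.1, fun a ha t => by
    simp only [Pi.smul_apply, smul_eq_mul, hf.2 a ha t]; ring⟩

lemma memHn_sub {n : ℕ} {f g : (Fin n → ℝ) → ℝ} (hf : MemHn f) (hg : MemHn g) :
    MemHn (f - g) := by
  have : f - g = f + (-1 : ℝ) • g := by funext t; simp [sub_eq_add_neg]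
  rw [this]; exact memHn_add hf (memHn_smul _ hg)

lemma memHn_neg {n : ℕ} {f : (Fin n → ℝ) → ℝ} (hf : MemHn f) :
    MemHn (fun t => -(f t)) :=
  ⟨hf.1.neg, fun c hc t => by
    show -(f (c • t)) = c * -(f t)
    rw [hf.2 c hc t]; ring⟩

lemma memHn_max {n : ℕ} {f g : (Fin n → ℝ) → ℝ} (hf : MemHn f) (hg : MemHn g) :
    MemHn (fun t => max (f t) (g t)) :=
  ⟨hf.1.max hg.1, fun c hc t => by
    show max (f (c • t)) (g (c • t)) = _
    rw [hf.2 c hc t, hg.2 c hc t, mul_max_of_nonneg _ _ hc]⟩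

lemma memHn_proj {n : ℕ} (i : Fin n) : MemHn (projFn n i) :=
  ⟨continuous_apply i, fun c _ t => by simp [projFn]⟩

lemma memHn_sigma : MemHn sigmaMax :=
  memHn_max (memHn_proj (n := 2) 0) (memHn_proj (n := 2) 1)

lemma memHn_norm {n : ℕ} : MemHn (fun t : Fin n → ℝ => ‖t‖) :=
  ⟨continuous_norm, fun c hc t => by
    show ‖c • t‖ = c * ‖t‖
    rw [norm_smul, Real.norm_eq_abs, abs_of_nonneg hc]⟩

lemma max_zero_sub_eq' (a : ℝ) : max a 0 - max (-a) 0 = a := by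
  rcases le_total a 0 with h | h
  · rw [max_eq_right h, max_eq_left (neg_nonneg.mpr h)]; ring
  · rw [max_eq_left h, max_eq_right (neg_nonpos.mpr h)]; ring

theorem stmt12 {X : Type*} [AddCommGroup X] [Module ℝ X]
    (Φ : ∀ n : ℕ, (Fin n → X) → ((Fin n → ℝ) → ℝ) → X)
    (hadd : ∀ (n : ℕ) (x : Fin n → X) (f g : (Fin n → ℝ) → ℝ),
      MemHn f → MemHn g → Φ n x (f + g) = Φ n x f + Φ n x g)
    (hsmul : ∀ (n : ℕ) (x : Fin n → X) (c : ℝ) (f : (Fin n → ℝ) → ℝ),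
      MemHn f → Φ n x (c • f) = c • Φ n x f)
    (hproj : ∀ (n : ℕ) (x : Fin n → X) (i : Fin n), Φ n x (projFn n i) = x i)
    (hcomp : ∀ (m n : ℕ) (x : Fin n → X) (f : Fin m → ((Fin n → ℝ) → ℝ))
      (g : (Fin m → ℝ) → ℝ), (∀ i, MemHn (f i)) → MemHn g →
      Φ m (fun i => Φ n x (f i)) g = Φ n x (fun t => g (fun i => f i t)))
    (r : X → X → Prop) (hr : ∀ x y, r x y ↔ Φ 2 ![x, y] sigmaMax = y) :
    -- `X` is Archimedean for the induced order ...
    (∀ x y : X, r 0 x → r 0 y → (∀ k : ℕ, r ((k : ℕ) • x) y) → x = 0)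
      ↔
    -- ... iff every `ker Φ_x` is closed in the sup-norm topology of
    -- `H_n ≅ C(S_{ℓ∞ⁿ})`, i.e. contains every member of `H_n` that it
    -- approximates uniformly on the unit sphere of `ℓ∞ⁿ`:
    (∀ (n : ℕ) (x : Fin n → X) (f : (Fin n → ℝ) → ℝ), MemHn f →
      (∀ ε : ℝ, 0 < ε → ∃ g : (Fin n → ℝ) → ℝ, MemHn g ∧ Φ n x g = 0 ∧
        ∀ t : Fin n → ℝ, ‖t‖ = 1 → |f t - g t| ≤ ε) →
      Φ n x f = 0) := by
  -- Φ of the zero function is 0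
  have phi0 : ∀ (n : ℕ) (x : Fin n → X), Φ n x 0 = 0 := by
    intro n x
    have h := hsmul n x 0 0 memHn_zero
    simpa using h
  -- Φ is subtractive
  have phisub : ∀ (n : ℕ) (x : Fin n → X) (f g : (Fin n → ℝ) → ℝ),
      MemHn f → MemHn g → Φ n x (f - g) = Φ n x f - Φ n x g := by
    intro n x f g hf hg
    have h1 : f - g = f + (-1 : ℝ) • g := by funext t; simp [sub_eq_add_neg]
    rw [h1, hadd n x f _ hf (memHn_smul _ hg), hsmul n x (-1) g hg]
    simp [sub_eq_add_neg]
  -- the key composition identity with `sigmaMax`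
  have keysup : ∀ (n : ℕ) (x : Fin n → X) (g₁ g₂ : (Fin n → ℝ) → ℝ),
      MemHn g₁ → MemHn g₂ →
      Φ 2 ![Φ n x g₁, Φ n x g₂] sigmaMax = Φ n x (fun t => max (g₁ t) (g₂ t)) := by
    intro n x g₁ g₂ h₁ h₂
    have hv : ∀ i : Fin 2, MemHn (![g₁, g₂] i) := by
      intro i; fin_cases i; exacts [h₁, h₂]
    have h := hcomp 2 n x ![g₁, g₂] sigmaMax hv memHn_sigma
    have e1 : (fun i => Φ n x (![g₁, g₂] i)) = ![Φ n x g₁, Φ n x g₂] := by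
      funext i; fin_cases i <;> rfl
    have e2 : (fun t => sigmaMax fun i => ![g₁, g₂] i t) =
        fun t => max (g₁ t) (g₂ t) := by
      funext t
      simp [sigmaMax, Matrix.cons_val_zero, Matrix.cons_val_one, Matrix.head_cons]
    rw [e1, e2] at h
    exact h
  -- monotonicity: pointwise `f ≤ g` gives `Φ f ≤ Φ g` in the induced order
  have mono : ∀ (n : ℕ) (x : Fin n → X) (f g : (Fin n → ℝ) → ℝ),
      MemHn f → MemHn g → (∀ t, f t ≤ g t) →
      Φ 2 ![Φ n x f, Φ n x g] sigmaMax = Φ n x g := by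
    intro n x f g hf hg hle
    rw [keysup n x f g hf hg]
    congr 1; funext t; exact max_eq_right (hle t)
  -- symmetry of sigmaMax
  have swap : ∀ (a b : X), Φ 2 ![a, b] sigmaMax = Φ 2 ![b, a] sigmaMax := by
    intro a b
    have hv : ∀ i : Fin 2, MemHn (![projFn 2 1, projFn 2 0] i) := by
      intro i; fin_cases i; exacts [memHn_proj 1, memHn_proj 0]
    have h := hcomp 2 2 ![b, a] ![projFn 2 1, projFn 2 0] sigmaMax hv memHn_sigma
    have e1 : (fun i => Φ 2 ![b, a] (![projFn 2 1, projFn 2 0] i)) = ![a, b] := by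
      funext i; fin_cases i <;> simp [hproj]
    have e2 : (fun t : Fin 2 → ℝ => sigmaMax fun i => ![projFn 2 1, projFn 2 0] i t)
        = sigmaMax := by
      funext t
      simp [sigmaMax, projFn, max_comm]
    rw [e1, e2] at h
    exact h
  -- the kernel is closed under positive part
  have kerpos : ∀ (n : ℕ) (x : Fin n → X) (g : (Fin n → ℝ) → ℝ),
      MemHn g → Φ n x g = 0 → Φ n x (fun t => max (g t) 0) = 0 := by
    intro n x g hg hg0
    have h1 := keysup n x g 0 hg memHn_zero
    have h2 := keysup n x 0 0 (memHn_zero (n := n)) memHn_zero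
    rw [phi0 n x, hg0] at h1
    rw [phi0 n x] at h2
    have h3 : (fun t => max ((0 : (Fin n → ℝ) → ℝ) t) ((0 : (Fin n → ℝ) → ℝ) t))
        = (0 : (Fin n → ℝ) → ℝ) := by funext t; simp
    rw [h3, phi0 n x] at h2
    have : Φ n x (fun t => max (g t) ((0 : (Fin n → ℝ) → ℝ) t)) = 0 := by
      rw [← h1, h2]
    exact this
  -- the forward core: nonnegative members of a closed kernel approximation
  have core : (∀ x y : X, r 0 x → r 0 y → (∀ k : ℕ, r ((k : ℕ) • x) y) → x = 0) →
      ∀ (n : ℕ) (x : Fin n → X) (p : (Fin n → ℝ) → ℝ), MemHn p → (∀ t, 0 ≤ p t) →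
      (∀ ε : ℝ, 0 < ε → ∃ g, MemHn g ∧ Φ n x g = 0 ∧
        ∀ t, ‖t‖ = 1 → |p t - g t| ≤ ε) →
      Φ n x p = 0 := by
    intro arch n x p hp hp0 happ
    have hNmem : MemHn (fun t : Fin n → ℝ => ‖t‖) := memHn_norm
    -- pointwise bound from the sphere bound
    have bound : ∀ ε : ℝ, 0 < ε → ∀ g : (Fin n → ℝ) → ℝ, MemHn g →
        (∀ t, ‖t‖ = 1 → |p t - g t| ≤ ε) → ∀ t, p t - g t ≤ ε * ‖t‖ := by
      intro ε hε g hg hsb t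
      by_cases ht : t = 0
      · have hp00 : p 0 = 0 := by
          have h := hp.2 0 le_rfl 0; simpa using h
        have hg00 : g 0 = 0 := by
          have h := hg.2 0 le_rfl 0; simpa using h
        subst ht
        simp [hp00, hg00]
      · have hnt : (0 : ℝ) < ‖t‖ := norm_pos_iff.mpr ht
        set s : Fin n → ℝ := ‖t‖⁻¹ • t with hs
        have hs1 : ‖s‖ = 1 := by
          rw [hs, norm_smul, Real.norm_eq_abs, abs_inv,
            abs_of_nonneg (norm_nonneg t), inv_mul_cancel₀ hnt.ne']
        have hts : ‖t‖ • s = t := by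
          rw [hs, smul_smul, mul_inv_cancel₀ hnt.ne', one_smul]
        have hpt : p t = ‖t‖ * p s := by
          conv_lhs => rw [← hts]
          exact hp.2 _ (norm_nonneg t) s
        have hgt : g t = ‖t‖ * g s := by
          conv_lhs => rw [← hts]
          exact hg.2 _ (norm_nonneg t) s
        have h1 : p s - g s ≤ ε := le_of_abs_le (hsb s hs1)
        have h2 := mul_le_mul_of_nonneg_left h1 (norm_nonneg t)
        rw [hpt, hgt]
        nlinarith [h2]
    set u := Φ n x p with hu
    set e := Φ n x (fun t : Fin n → ℝ => ‖t‖) with he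
    have r0u : r 0 u := by
      rw [hr]
      have h := mono n x 0 p memHn_zero hp (fun t => hp0 t)
      rw [phi0 n x] at h
      exact h
    have r0e : r 0 e := by
      rw [hr]
      have h := mono n x 0 (fun t => ‖t‖) memHn_zero hNmem (fun t => norm_nonneg t)
      rw [phi0 n x] at h
      exact h
    have rk : ∀ k : ℕ, r ((k : ℕ) • u) e := by
      intro k
      have hεpos : (0 : ℝ) < 1 / ((k : ℝ) + 1) := by positivity
      obtain ⟨g, hg, hg0, hsb⟩ := happ (1 / ((k : ℝ) + 1)) hεpos
      have hb := bound _ hεpos g hg hsb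
      have hmem : MemHn ((k : ℝ) • (p - g)) := memHn_smul _ (memHn_sub hp hg)
      have hΦh : Φ n x ((k : ℝ) • (p - g)) = (k : ℕ) • u := by
        rw [hsmul n x _ _ (memHn_sub hp hg), phisub n x p g hp hg, hg0, sub_zero,
          Nat.cast_smul_eq_nsmul]
      have hle : ∀ t, ((k : ℝ) • (p - g)) t ≤ ‖t‖ := by
        intro t
        show (k : ℝ) * (p t - g t) ≤ ‖t‖
        have h1 := hb t
        have h2 : (k : ℝ) * (p t - g t) ≤ (k : ℝ) * (1 / ((k : ℝ) + 1) * ‖t‖) :=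
          mul_le_mul_of_nonneg_left h1 (Nat.cast_nonneg k)
        have hk1 : (0 : ℝ) < (k : ℝ) + 1 := by positivity
        have h3 : (k : ℝ) * (1 / ((k : ℝ) + 1) * ‖t‖) ≤ ‖t‖ := by
          rw [show (k : ℝ) * (1 / ((k : ℝ) + 1) * ‖t‖)
              = ((k : ℝ) / ((k : ℝ) + 1)) * ‖t‖ by ring]
          have h4 : (k : ℝ) / ((k : ℝ) + 1) ≤ 1 :=
            div_le_one_of_le₀ (by linarith) (le_of_lt hk1)
          nlinarith [norm_nonneg t]
        linarith
      have h := mono n x ((k : ℝ) • (p - g)) (fun t => ‖t‖) hmem hNmem hle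
      rw [hΦh] at h
      rw [hr]
      exact h
    exact arch u e r0u r0e rk
  constructor
  · -- Archimedean → kernels closed
    intro arch n x f hf happ
    have hfp : MemHn (fun t => max (f t) 0) := memHn_max hf memHn_zero
    have hfm : MemHn (fun t => max (-(f t)) 0) := memHn_max (memHn_neg hf) memHn_zero
    -- approximants for the positive part
    have h1 : Φ n x (fun t => max (f t) 0) = 0 := by
      refine core arch n x _ hfp (fun t => le_max_right _ _) ?_
      intro ε hε
      obtain ⟨g, hg, hg0, hsb⟩ := happ ε hε
      refine ⟨fun t => max (g t) 0, memHn_max hg memHn_zero, kerpos n x g hg hg0, ?_⟩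
      intro t ht
      calc |max (f t) 0 - max (g t) 0| ≤ |f t - g t| := abs_max_sub_max_le_abs _ _ _
        _ ≤ ε := hsb t ht
    -- approximants for the negative part
    have h2 : Φ n x (fun t => max (-(f t)) 0) = 0 := by
      refine core arch n x _ hfm (fun t => le_max_right _ _) ?_
      intro ε hε
      obtain ⟨g, hg, hg0, hsb⟩ := happ ε hε
      have hgneg : Φ n x (fun t => -(g t)) = 0 := by
        have hng : (fun t => -(g t)) = (-1 : ℝ) • g := by funext t; simp
        rw [hng, hsmul n x (-1) g hg, hg0, smul_zero]
      refine ⟨fun t => max (-(g t)) 0, memHn_max (memHn_neg hg) memHn_zero,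
        kerpos n x _ (memHn_neg hg) hgneg, ?_⟩
      intro t ht
      calc |max (-(f t)) 0 - max (-(g t)) 0|
          ≤ |(-(f t)) - (-(g t))| := abs_max_sub_max_le_abs _ _ _
        _ = |f t - g t| := by rw [neg_sub_neg, abs_sub_comm]
        _ ≤ ε := hsb t ht
    have h3 : (fun t => max (f t) 0) - (fun t => max (-(f t)) 0) = f := by
      funext t
      exact max_zero_sub_eq' (f t)
    calc Φ n x f = Φ n x ((fun t => max (f t) 0) - fun t => max (-(f t)) 0) := by
          rw [h3]
      _ = Φ n x (fun t => max (f t) 0) - Φ n x (fun t => max (-(f t)) 0) :=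
          phisub n x _ _ hfp hfm
      _ = 0 := by rw [h1, h2, sub_zero]
  · -- kernels closed → Archimedean
    intro hker x y h0x h0y hky
    have hf : MemHn (fun t : Fin 2 → ℝ => max (t 0) 0) :=
      memHn_max (memHn_proj 0) memHn_zero
    have happ : ∀ ε : ℝ, 0 < ε → ∃ g, MemHn g ∧ Φ 2 ![x, y] g = 0 ∧
        ∀ t : Fin 2 → ℝ, ‖t‖ = 1 → |max (t 0) 0 - g t| ≤ ε := by
      intro ε hε
      obtain ⟨k, hk⟩ := exists_nat_one_div_lt hε
      set c : ℝ := 1 / ((k : ℝ) + 1) with hc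
      have hcpos : 0 < c := by positivity
      have hKpos : (0 : ℝ) < (k : ℝ) + 1 := by positivity
      have hqmem : MemHn (fun t : Fin 2 → ℝ => max (t 0 - c * t 1) 0) := by
        have := memHn_max (n := 2)
          (memHn_sub (memHn_proj 0) (memHn_smul c (memHn_proj 1))) memHn_zero
        exact this
      -- the kernel property of q
      have hker0 : Φ 2 ![x, y] (fun t : Fin 2 → ℝ => max (t 0 - c * t 1) 0) = 0 := by
        -- scale by K = k+1
        set K : ℝ := (k : ℝ) + 1 with hK
        have hKc : K * c = 1 := by
          rw [hK, hc]; field_simp; exact hK.symm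
        have hscale : (K • fun t : Fin 2 → ℝ => max (t 0 - c * t 1) 0)
            = fun t : Fin 2 → ℝ => max (K * t 0) (t 1) - t 1 := by
          funext t
          show K * max (t 0 - c * t 1) 0 = _
          rw [mul_max_of_nonneg _ _ (le_of_lt hKpos), mul_zero, mul_sub,
            ← mul_assoc, hKc, one_mul]
          rw [show (0 : ℝ) = t 1 - t 1 by ring]
          rw [max_sub_sub_right]
        have hsigK : Φ 2 ![x, y] (fun t : Fin 2 → ℝ => max (K * t 0) (t 1)) = y := by
          have h := keysup 2 ![x, y] (K • projFn 2 0) (projFn 2 1)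
            (memHn_smul K (memHn_proj 0)) (memHn_proj 1)
          have e1 : Φ 2 ![x, y] (K • projFn 2 0) = (k + 1 : ℕ) • x := by
            rw [hsmul 2 ![x, y] K _ (memHn_proj 0), hproj]
            rw [show K = ((k + 1 : ℕ) : ℝ) by push_cast [hK]; ring]
            rw [Nat.cast_smul_eq_nsmul]
            simp
          have e2 : Φ 2 ![x, y] (projFn 2 1) = y := by rw [hproj]; simp
          rw [e1, e2] at h
          have hky' : Φ 2 ![(k + 1 : ℕ) • x, y] sigmaMax = y := (hr _ _).mp (hky (k + 1))
          rw [hky'] at h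
          exact h.symm
        have hsub1 : (fun t : Fin 2 → ℝ => max (K * t 0) (t 1) - t 1)
            = (fun t : Fin 2 → ℝ => max (K * t 0) (t 1)) - projFn 2 1 := by
          funext t; rfl
        have hmem1 : MemHn (fun t : Fin 2 → ℝ => max (K * t 0) (t 1)) := by
          have := memHn_max (n := 2) (memHn_smul K (memHn_proj 0)) (memHn_proj 1)
          exact this
        have hΦK : Φ 2 ![x, y] (K • fun t : Fin 2 → ℝ => max (t 0 - c * t 1) 0) = 0 := by
          rw [hscale, hsub1, phisub 2 ![x, y] _ _ hmem1 (memHn_proj 1), hsigK, hproj]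
          simp
        rw [hsmul 2 ![x, y] K _ hqmem] at hΦK
        rcases smul_eq_zero.mp hΦK with h | h
        · exact absurd h (ne_of_gt hKpos)
        · exact h
      refine ⟨_, hqmem, hker0, ?_⟩
      intro t ht
      have hb : |max (t 0) 0 - max (t 0 - c * t 1) 0| ≤ |t 0 - (t 0 - c * t 1)| :=
        abs_max_sub_max_le_abs _ _ _
      have ht1 : |t 1| ≤ 1 := by
        have := norm_le_pi_norm t 1
        rwa [Real.norm_eq_abs, ht] at this
      calc |max (t 0) 0 - max (t 0 - c * t 1) 0|
          ≤ |t 0 - (t 0 - c * t 1)| := hb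
        _ = c * |t 1| := by
            rw [show t 0 - (t 0 - c * t 1) = c * t 1 by ring, abs_mul,
              abs_of_nonneg (le_of_lt hcpos)]
        _ ≤ c * 1 := mul_le_mul_of_nonneg_left ht1 (le_of_lt hcpos)
        _ ≤ ε := by rw [mul_one]; exact le_of_lt hk
    have hres := hker 2 ![x, y] _ hf happ
    -- identify Φ ![x,y] (π₀ ⊔ 0) with x
    have hfx : Φ 2 ![x, y] (fun t : Fin 2 → ℝ => max (t 0) 0) = x := by
      have h := keysup 2 ![x, y] (projFn 2 0) 0 (memHn_proj 0) memHn_zero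
      rw [hproj, phi0] at h
      have e0 : (![x, y] : Fin 2 → X) 0 = x := by simp
      rw [e0] at h
      have h' : Φ 2 ![x, 0] sigmaMax
          = Φ 2 ![x, y] (fun t : Fin 2 → ℝ => max (t 0) 0) := h
      rw [swap x 0] at h'
      have h0x' : Φ 2 ![(0 : X), x] sigmaMax = x := (hr _ _).mp h0x
      rw [h0x'] at h'
      exact h'.symm
    rw [hfx] at hres
    exact hres
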